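/- Fix a real number t, a real σ > 0, and trimming proportions a, b with 0 ≤ a, 0 < b and a + b < 1. For θ ∈ ℝ write γ(θ) = (t − θ)/σ and define c_{y,1}(θ) = (1/(1 − a − b))·∫_a^{1−b} Φ⁻¹(s + (1 − s)·Φ(γ(θ))) ds. Then c_{y,1} is differentiable in θ with derivative c_{y,1}'(θ) = −(φ(γ(θ)) / (σ·(1 − a − b)))·∫_a^{1−b} (1 − s) / φ(Φ⁻¹(s + (1 − s)·Φ(γ(θ)))) ds. -/

import Mathlib

open Real MeasureTheory

/-- Standard normal density `φ(x) = (2π)^(−1/2) exp(−x²/2)`. -/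
noncomputable def stdPDF (x : ℝ) : ℝ := (Real.sqrt (2 * Real.pi))⁻¹ * Real.exp (-x ^ 2 / 2)

/-- Standard normal cumulative distribution function `Φ(x) = ∫_{−∞}^x φ(u) du`. -/
noncomputable def stdCDF (x : ℝ) : ℝ := ∫ u in Set.Iic x, stdPDF u

/-- Mills hazard `h(γ) = φ(γ)/(1 − Φ(γ))`. -/
noncomputable def millsHazard (γ : ℝ) : ℝ := stdPDF γ / (1 - stdCDF γ)

/-- The standard normal quantile function `Φ⁻¹`, the inverse of `Φ`. -/
noncomputable def stdQuantile : ℝ → ℝ := Function.invFun stdCDF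

/-!
Since `φ' = -x φ`, the function `φ ∘ Φ⁻¹` is an antiderivative of `-Φ⁻¹` on `(0, 1)`. For fixed
`c = Φ(γ) ∈ (0, 1)` the point `s + (1 - s) c` is affine in `s` with slope `1 - c`, so the integral
of `Φ⁻¹(s + (1 - s) c)` over `[a, 1 - b]` has the closed form
`(φ(Φ⁻¹(a + (1 - a) c)) - φ(Φ⁻¹(1 - b + b c))) / (1 - c)`, which is differentiable in `c`.
Integrating `(1 - s) · d/ds Φ⁻¹(s + (1 - s) c)` by parts shows that its derivative is
`∫ (1 - s) / φ(Φ⁻¹(s + (1 - s) c)) ds`, and the chain rule through `c = Φ((t - θ) / σ)` finishes.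
-/

open Set Filter Topology ProbabilityTheory

lemma stdPDF_eq_gaussianPDFReal : stdPDF = gaussianPDFReal 0 1 := by
  funext x
  simp [stdPDF, gaussianPDFReal]

lemma stdPDF_pos (x : ℝ) : 0 < stdPDF x :=
  stdPDF_eq_gaussianPDFReal ▸ gaussianPDFReal_pos 0 1 x one_ne_zero

lemma continuous_stdPDF : Continuous stdPDF := by
  unfold stdPDF
  fun_prop

lemma integrable_stdPDF : Integrable stdPDF :=
  stdPDF_eq_gaussianPDFReal ▸ integrable_gaussianPDFReal 0 1

lemma integral_stdPDF : ∫ x, stdPDF x = 1 :=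
  stdPDF_eq_gaussianPDFReal ▸ integral_gaussianPDFReal_eq_one 0 one_ne_zero

lemma hasDerivAt_stdPDF (x : ℝ) : HasDerivAt stdPDF (-x * stdPDF x) x := by
  have h_exponent : HasDerivAt (fun y : ℝ => -y ^ 2 / 2) (-x) x := by
    simpa using ((hasDerivAt_pow 2 x).neg.div_const 2).congr_deriv (by ring : _ = -x)
  exact (h_exponent.exp.const_mul _).congr_deriv (by simp only [stdPDF]; ring)

lemma stdCDF_eq_add_integral (x : ℝ) : stdCDF x = stdCDF 0 + ∫ u in (0 : ℝ)..x, stdPDF u := by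
  rw [← intervalIntegral.integral_Iic_sub_Iic integrable_stdPDF.integrableOn
    integrable_stdPDF.integrableOn, stdCDF, stdCDF]
  ring

lemma hasDerivAt_stdCDF (x : ℝ) : HasDerivAt stdCDF (stdPDF x) x := by
  rw [funext stdCDF_eq_add_integral]
  exact (intervalIntegral.integral_hasDerivAt_right integrable_stdPDF.intervalIntegrable
    (continuous_stdPDF.stronglyMeasurableAtFilter _ _) continuous_stdPDF.continuousAt).const_add _

lemma continuous_stdCDF : Continuous stdCDF :=
  continuous_iff_continuousAt.2 fun x => (hasDerivAt_stdCDF x).continuousAt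

lemma strictMono_stdCDF : StrictMono stdCDF :=
  strictMono_of_deriv_pos fun x => (hasDerivAt_stdCDF x).deriv ▸ stdPDF_pos x

lemma stdCDF_add_integral_Ioi (x : ℝ) : stdCDF x + ∫ u in Ioi x, stdPDF u = 1 := by
  rw [stdCDF, intervalIntegral.integral_Iic_add_Ioi integrable_stdPDF.integrableOn
    integrable_stdPDF.integrableOn, integral_stdPDF]

lemma tendsto_stdCDF_atTop : Tendsto stdCDF atTop (𝓝 1) :=
  integral_stdPDF ▸ (aecover_Iic tendsto_id).integral_tendsto_of_countably_generated
    integrable_stdPDF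

lemma tendsto_stdCDF_atBot : Tendsto stdCDF atBot (𝓝 0) := by
  have hIoi : Tendsto (fun x : ℝ => ∫ u in Ioi x, stdPDF u) atBot (𝓝 1) :=
    integral_stdPDF ▸ (aecover_Ioi tendsto_id).integral_tendsto_of_countably_generated
      integrable_stdPDF
  have hCDF : stdCDF = fun x => 1 - ∫ u in Ioi x, stdPDF u :=
    funext fun x => eq_sub_of_add_eq (stdCDF_add_integral_Ioi x)
  simpa [hCDF] using hIoi.const_sub 1

lemma stdCDF_mem_Ioo (x : ℝ) : stdCDF x ∈ Ioo 0 1 :=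
  ⟨(strictMono_stdCDF.monotone.le_of_tendsto tendsto_stdCDF_atBot (x - 1)).trans_lt
      (strictMono_stdCDF (sub_one_lt x)),
    (strictMono_stdCDF (lt_add_one x)).trans_le
      (strictMono_stdCDF.monotone.ge_of_tendsto tendsto_stdCDF_atTop _)⟩

lemma stdCDF_stdQuantile {p : ℝ} (hp : p ∈ Ioo 0 1) : stdCDF (stdQuantile p) = p :=
  Function.invFun_eq <| mem_range_of_exists_le_of_exists_ge continuous_stdCDF
    ((tendsto_stdCDF_atBot.eventually_lt_const hp.1).exists.imp fun _ => le_of_lt)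
    ((tendsto_stdCDF_atTop.eventually_const_lt hp.2).exists.imp fun _ => le_of_lt)

lemma stdQuantile_stdCDF (x : ℝ) : stdQuantile (stdCDF x) = x :=
  Function.leftInverse_invFun strictMono_stdCDF.injective x

lemma strictMonoOn_stdQuantile : StrictMonoOn stdQuantile (Ioo 0 1) := fun p hp q hq hpq =>
  strictMono_stdCDF.lt_iff_lt.1 (by rwa [stdCDF_stdQuantile hp, stdCDF_stdQuantile hq])

lemma image_stdQuantile_Ioo : stdQuantile '' Ioo 0 1 = univ :=
  eq_univ_of_forall fun x => ⟨stdCDF x, stdCDF_mem_Ioo x, stdQuantile_stdCDF x⟩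

lemma continuousAt_stdQuantile {p : ℝ} (hp : p ∈ Ioo 0 1) : ContinuousAt stdQuantile p :=
  strictMonoOn_stdQuantile.continuousAt_of_image_mem_nhds (Ioo_mem_nhds hp.1 hp.2)
    (image_stdQuantile_Ioo ▸ univ_mem)

lemma hasDerivAt_stdQuantile {p : ℝ} (hp : p ∈ Ioo 0 1) :
    HasDerivAt stdQuantile (stdPDF (stdQuantile p))⁻¹ p :=
  (hasDerivAt_stdCDF _).of_local_left_inverse (continuousAt_stdQuantile hp) (stdPDF_pos _).ne'
    (eventually_of_mem (Ioo_mem_nhds hp.1 hp.2) fun _ => stdCDF_stdQuantile)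

lemma hasDerivAt_stdPDF_stdQuantile {p : ℝ} (hp : p ∈ Ioo 0 1) :
    HasDerivAt (fun q => stdPDF (stdQuantile q)) (-stdQuantile p) p :=
  ((hasDerivAt_stdPDF _).comp p (hasDerivAt_stdQuantile hp)).congr_deriv
    (mul_inv_cancel_right₀ (stdPDF_pos _).ne' _)

lemma integral_stdQuantile {u v : ℝ} (hu : u ∈ Ioo 0 1) (hv : v ∈ Ioo 0 1) :
    ∫ p in u..v, stdQuantile p = stdPDF (stdQuantile u) - stdPDF (stdQuantile v) := by
  have huv : uIcc u v ⊆ Ioo 0 1 := ordConnected_Ioo.uIcc_subset hu hv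
  rw [intervalIntegral.integral_eq_sub_of_hasDerivAt
    (f := fun p => -stdPDF (stdQuantile p))
    (fun p hp => (hasDerivAt_stdPDF_stdQuantile (huv hp)).neg.congr_deriv (neg_neg _))
    (ContinuousOn.intervalIntegrable fun p hp =>
      (continuousAt_stdQuantile (huv hp)).continuousWithinAt)]
  ring

section TruncatedQuantile

variable {c α β : ℝ}

lemma add_one_sub_mul_mem_Ioo {s : ℝ} (hc : c ∈ Ioo 0 1) (hs : s ∈ Ico 0 1) :
    s + (1 - s) * c ∈ Ioo 0 1 := by
  obtain ⟨hc₀, hc₁⟩ := hc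
  obtain ⟨hs₀, hs₁⟩ := hs
  constructor <;> nlinarith

lemma integral_stdQuantile_add_one_sub_mul (hc : c ∈ Ioo 0 1) (hα : α ∈ Ico 0 1)
    (hβ : β ∈ Ico 0 1) :
    ∫ s in α..β, stdQuantile (s + (1 - s) * c) = (1 - c)⁻¹ *
      (stdPDF (stdQuantile (α + (1 - α) * c)) - stdPDF (stdQuantile (β + (1 - β) * c))) := by
  have h_affine : ∀ s, s + (1 - s) * c = (1 - c) * s + c := fun s => by ring
  have hpα := add_one_sub_mul_mem_Ioo hc hα
  have hpβ := add_one_sub_mul_mem_Ioo hc hβ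
  simp_rw [h_affine] at hpα hpβ ⊢
  rw [intervalIntegral.integral_comp_mul_add _ (sub_ne_zero.2 hc.2.ne'), smul_eq_mul,
    integral_stdQuantile hpα hpβ]

lemma hasDerivAt_stdQuantile_add_one_sub_mul {s : ℝ} (hs : s + (1 - s) * c ∈ Ioo 0 1) :
    HasDerivAt (fun s => stdQuantile (s + (1 - s) * c))
      ((stdPDF (stdQuantile (s + (1 - s) * c)))⁻¹ * (1 - c)) s :=
  (hasDerivAt_stdQuantile hs).comp s
    (((hasDerivAt_id s).add (((hasDerivAt_id s).const_sub 1).mul_const c)).congr_deriv (by ring))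

lemma integral_one_sub_div_stdPDF_stdQuantile (hc : c ∈ Ioo 0 1) (hα : α ∈ Ico 0 1)
    (hβ : β ∈ Ico 0 1) :
    ∫ s in α..β, (1 - s) / stdPDF (stdQuantile (s + (1 - s) * c)) = (1 - c)⁻¹ *
      ((1 - β) * stdQuantile (β + (1 - β) * c) - (1 - α) * stdQuantile (α + (1 - α) * c) +
        ∫ s in α..β, stdQuantile (s + (1 - s) * c)) := by
  have hmem : ∀ s ∈ uIcc α β, s + (1 - s) * c ∈ Ioo 0 1 := fun s hs =>
    add_one_sub_mul_mem_Ioo hc (ordConnected_Ico.uIcc_subset hα hβ hs)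
  have h_parts := intervalIntegral.integral_mul_deriv_eq_deriv_mul (u := fun s => 1 - s)
    (fun s _ => ((hasDerivAt_id s).const_sub 1))
    (fun s hs => hasDerivAt_stdQuantile_add_one_sub_mul (hmem s hs))
    intervalIntegrable_const
    (ContinuousOn.intervalIntegrable fun s hs =>
      (((continuous_stdPDF.continuousAt.comp
        (hasDerivAt_stdQuantile_add_one_sub_mul (hmem s hs)).continuousAt).inv₀
          (stdPDF_pos _).ne').mul continuousAt_const).continuousWithinAt)
  have hc₁ : 1 - c ≠ 0 := sub_ne_zero.2 hc.2.ne'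
  have h_integrand : ∀ s, (1 - s) / stdPDF (stdQuantile (s + (1 - s) * c)) =
      (1 - c)⁻¹ * ((1 - s) * ((stdPDF (stdQuantile (s + (1 - s) * c)))⁻¹ * (1 - c))) :=
    fun s => by field_simp
  simp_rw [h_integrand, intervalIntegral.integral_const_mul, h_parts, neg_one_mul,
    intervalIntegral.integral_neg]
  ring

lemma hasDerivAt_stdPDF_stdQuantile_add_one_sub_mul (hc : c ∈ Ioo 0 1) (hα : α ∈ Ico 0 1) :
    HasDerivAt (fun x => stdPDF (stdQuantile (α + (1 - α) * x)))
      (-stdQuantile (α + (1 - α) * c) * (1 - α)) c :=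
  (hasDerivAt_stdPDF_stdQuantile (add_one_sub_mul_mem_Ioo hc hα)).comp
    (h₂ := fun q => stdPDF (stdQuantile q)) c
    ((((hasDerivAt_id c).const_mul (1 - α)).const_add α).congr_deriv (mul_one _))

theorem hasDerivAt_integral_stdQuantile_add_one_sub_mul (hc : c ∈ Ioo 0 1) (hα : α ∈ Ico 0 1)
    (hβ : β ∈ Ico 0 1) :
    HasDerivAt (fun x => ∫ s in α..β, stdQuantile (s + (1 - s) * x))
      (∫ s in α..β, (1 - s) / stdPDF (stdQuantile (s + (1 - s) * c))) c := by
  have h_closed : (fun x => ∫ s in α..β, stdQuantile (s + (1 - s) * x)) =ᶠ[𝓝 c]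
      fun x => (1 - x)⁻¹ * (stdPDF (stdQuantile (α + (1 - α) * x)) -
        stdPDF (stdQuantile (β + (1 - β) * x))) :=
    eventually_of_mem (Ioo_mem_nhds hc.1 hc.2) fun x hx =>
      integral_stdQuantile_add_one_sub_mul hx hα hβ
  have hc₁ : 1 - c ≠ 0 := sub_ne_zero.2 hc.2.ne'
  have h_inv : HasDerivAt (fun x => (1 - x)⁻¹) ((1 - c) ^ 2)⁻¹ c :=
    (((hasDerivAt_id c).const_sub 1).inv hc₁).congr_deriv (by simp)
  refine ((h_inv.mul ((hasDerivAt_stdPDF_stdQuantile_add_one_sub_mul hc hα).sub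
    (hasDerivAt_stdPDF_stdQuantile_add_one_sub_mul hc hβ))).congr_of_eventuallyEq
      h_closed).congr_deriv ?_
  rw [integral_one_sub_div_stdPDF_stdQuantile hc hα hβ,
    integral_stdQuantile_add_one_sub_mul hc hα hβ, Pi.sub_apply]
  field_simp
  ring

end TruncatedQuantile

theorem cY1_hasDerivAt_general (t σ a b : ℝ) (ha : 0 ≤ a) (hb : 0 < b)
    (hab : a + b < 1) (θ : ℝ) :
    HasDerivAt
      (fun θ' : ℝ => (1 - a - b)⁻¹ *
        ∫ s in a..(1 - b), stdQuantile (s + (1 - s) * stdCDF ((t - θ') / σ)))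
      (-(stdPDF ((t - θ) / σ) / (σ * (1 - a - b))) *
        ∫ s in a..(1 - b),
          (1 - s) / stdPDF (stdQuantile (s + (1 - s) * stdCDF ((t - θ) / σ))))
      θ := by
  have hγ : HasDerivAt (fun θ' => stdCDF ((t - θ') / σ)) (stdPDF ((t - θ) / σ) * (-1 / σ)) θ :=
    (hasDerivAt_stdCDF _).comp θ (((hasDerivAt_id θ).const_sub t).div_const σ)
  have h_integral := (hasDerivAt_integral_stdQuantile_add_one_sub_mul
    (stdCDF_mem_Ioo ((t - θ) / σ)) ⟨ha, by linarith⟩ ⟨by linarith, by linarith⟩).comp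
      (h₂ := fun c => ∫ s in a..(1 - b), stdQuantile (s + (1 - s) * c)) θ hγ
  refine (h_integral.const_mul (1 - a - b)⁻¹).congr_deriv ?_
  simp only [div_eq_mul_inv, mul_inv]
  ring

/-- Differentiability of `c_{y,1}(θ)` with the stated derivative. -/
theorem cY1_hasDerivAt (t σ a b : ℝ) (hσ : 0 < σ) (ha : 0 ≤ a) (hb : 0 < b)
    (hab : a + b < 1) (θ : ℝ) :
    HasDerivAt
      (fun θ' : ℝ => (1 - a - b)⁻¹ *
        ∫ s in a..(1 - b), stdQuantile (s + (1 - s) * stdCDF ((t - θ') / σ)))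
      (-(stdPDF ((t - θ) / σ) / (σ * (1 - a - b))) *
        ∫ s in a..(1 - b),
          (1 - s) / stdPDF (stdQuantile (s + (1 - s) * stdCDF ((t - θ) / σ))))
      θ :=
  cY1_hasDerivAt_general t σ a b ha hb hab θ
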